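/- Let A = diag(s₁,…,sₙ) and B = diag(d₁,…,d_r) be nonnegative diagonal matrices with r ≤ n. Then the function ψ(Y) = ‖A − YYᵀ‖_F² + 2⟨B, YᵀY⟩ over Y ∈ ℝ^{n×r} admits a minimizer Y* that is a generalized permutation matrix, i.e., Y* has at most one nonzero element per row and at most one nonzero element per column. -/

import Mathlib

open Matrix

/-- Squared Frobenius norm. -/
noncomputable def frob2 {m k : ℕ} (M : Matrix (Fin m) (Fin k) ℝ) : ℝ :=
  ∑ i, ∑ j, (M i j) ^ 2

/-- Frobenius inner product `⟨A, B⟩ = tr(AᵀB)`. -/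
noncomputable def fip {m k : ℕ} (A B : Matrix (Fin m) (Fin k) ℝ) : ℝ :=
  ∑ i, ∑ j, A i j * B i j

/-- A generalized permutation matrix: at most one nonzero entry per row and
at most one nonzero entry per column. -/
def IsGenPerm {n r : ℕ} (Y : Matrix (Fin n) (Fin r) ℝ) : Prop :=
  (∀ i j j', Y i j ≠ 0 → Y i j' ≠ 0 → j = j') ∧
  (∀ i i' j, Y i j ≠ 0 → Y i' j ≠ 0 → i = i')

/-! Permuting rows and columns of `Y` simultaneously with `s` and `d` leaves `ψ` unchanged, so we
may assume `s` decreasing and `d` increasing. Diagonalize `YᵀY = U diag(μ) Uᵀ` with `U` orthogonal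
and `μ ≥ 0` decreasing, and put `Z = YU`, whose columns are orthogonal with squared norms `μ`. Then
`ψ(Y) = ‖s‖² - 2 ∑ᵢₖ sᵢ Zᵢₖ² + ∑ₖ μₖ² + 2 ∑ⱼₖ dⱼ Uⱼₖ² μₖ`, where `(Zᵢₖ²/μₖ)` is doubly
substochastic and `(Uⱼₖ²)` doubly stochastic. A majorization argument (an exchange bound on prefix
sums, then Abel summation) gives `∑ᵢₖ sᵢ Zᵢₖ² ≤ ∑ₖ μₖ sₖ` and `∑ⱼₖ dⱼ Uⱼₖ² μₖ ≥ ∑ₖ μₖ dₖ`, hence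
`ψ(Y) ≥ ‖s‖² + ∑ₖ (μₖ² - 2 μₖ (sₖ - dₖ)) ≥ ‖s‖² - ∑ₖ max(sₖ - dₖ, 0)²`. The generalized
permutation with `√max(sₖ - dₖ, 0)` at position `(k, k)` attains this bound. -/

open Finset

theorem sum_mul_le_sum_range_of_antitone {s c : ℕ → ℝ} {m n : ℕ} (hmn : m ≤ n)
    (hs : Antitone s) (hs0 : 0 ≤ s m) (hc0 : ∀ i ∈ range n, 0 ≤ c i)
    (hc1 : ∀ i ∈ range n, c i ≤ 1) (hc : ∑ i ∈ range n, c i ≤ m) :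
    ∑ i ∈ range n, c i * s i ≤ ∑ i ∈ range m, s i := by
  set θ := s m
  have head : ∀ i ∈ range m, c i * s i ≤ (s i - θ) + c i * θ := fun i hi => by
    have := hs (mem_range.mp hi).le
    nlinarith [hc1 i (range_subset_range.mpr hmn hi)]
  have tail : ∀ i ∈ Ico m n, c i * s i ≤ c i * θ := fun i hi =>
    mul_le_mul_of_nonneg_left (hs (mem_Ico.mp hi).1)
      (hc0 i (mem_range.mpr (mem_Ico.mp hi).2))
  calc ∑ i ∈ range n, c i * s i
      = ∑ i ∈ range m, c i * s i + ∑ i ∈ Ico m n, c i * s i := (sum_range_add_sum_Ico _ hmn).symm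
    _ ≤ ∑ i ∈ range m, ((s i - θ) + c i * θ) + ∑ i ∈ Ico m n, c i * θ :=
        add_le_add (sum_le_sum head) (sum_le_sum tail)
    _ = ∑ i ∈ range m, s i + ((∑ i ∈ range n, c i) * θ - m * θ) := by
        rw [← sum_range_add_sum_Ico c hmn]
        simp only [sum_add_distrib, sum_sub_distrib, ← sum_mul, sum_const, card_range,
          nsmul_eq_mul]
        ring
    _ ≤ ∑ i ∈ range m, s i := by
        linarith [mul_le_mul_of_nonneg_right hc hs0]

theorem sum_mul_le_sum_mul_of_antitone_of_sum_range_le {w x y : ℕ → ℝ} {r : ℕ} (hw : Antitone w)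
    (hw0 : 0 ≤ w) (hxy : ∀ m ≤ r, ∑ k ∈ range m, x k ≤ ∑ k ∈ range m, y k) :
    ∑ k ∈ range r, w k * x k ≤ ∑ k ∈ range r, w k * y k := by
  have by_parts (z : ℕ → ℝ) := sum_range_by_parts w z r
  simp only [smul_eq_mul] at by_parts
  rw [by_parts, by_parts]
  refine sub_le_sub (mul_le_mul_of_nonneg_left (hxy r le_rfl) (hw0 _)) (sum_le_sum fun i hi => ?_)
  have hi : i + 1 ≤ r := by have := mem_range.mp hi; omega
  exact mul_le_mul_of_nonpos_left (hxy _ hi) (sub_nonpos.mpr (hw i.le_succ))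

theorem sum_range_sum_range_mul_le_of_substochastic {s w : ℕ → ℝ} {C : ℕ → ℕ → ℝ} {n r : ℕ}
    (hr : r ≤ n) (hs : Antitone s) (hs0 : 0 ≤ s) (hw : Antitone w) (hw0 : 0 ≤ w)
    (hC0 : ∀ i ∈ range n, ∀ k ∈ range r, 0 ≤ C i k)
    (hrow : ∀ i ∈ range n, ∑ k ∈ range r, C i k ≤ 1)
    (hcol : ∀ k ∈ range r, ∑ i ∈ range n, C i k ≤ 1) :
    ∑ i ∈ range n, ∑ k ∈ range r, C i k * s i * w k ≤ ∑ k ∈ range r, w k * s k := by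
  have prefix_le : ∀ m ≤ r,
      ∑ k ∈ range m, ∑ i ∈ range n, C i k * s i ≤ ∑ k ∈ range m, s k := fun m hm => by
    have hsub : range m ⊆ range r := range_subset_range.mpr hm
    rw [sum_comm]
    simp only [← sum_mul]
    refine sum_mul_le_sum_range_of_antitone (hm.trans hr) hs (hs0 m)
      (fun i hi => sum_nonneg fun k hk => hC0 i hi k (hsub hk))
      (fun i hi => (sum_le_sum_of_subset_of_nonneg hsub
        fun k hk _ => hC0 i hi k hk).trans (hrow i hi)) ?_
    rw [sum_comm]
    calc ∑ k ∈ range m, ∑ i ∈ range n, C i k ≤ ∑ k ∈ range m, (1 : ℝ) :=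
          sum_le_sum fun k hk => hcol k (hsub hk)
      _ = m := by simp
  calc ∑ i ∈ range n, ∑ k ∈ range r, C i k * s i * w k
      = ∑ k ∈ range r, w k * ∑ i ∈ range n, C i k * s i := by
        rw [sum_comm]
        refine sum_congr rfl fun k _ => ?_
        rw [mul_sum]
        exact sum_congr rfl fun i _ => by ring
    _ ≤ ∑ k ∈ range r, w k * s k := sum_mul_le_sum_mul_of_antitone_of_sum_range_le hw hw0 prefix_le

def padZero {α : Type*} [Zero α] {n : ℕ} (f : Fin n → α) (i : ℕ) : α :=
  if h : i < n then f ⟨i, h⟩ else 0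

section padZero
variable {α : Type*} [Zero α] {n : ℕ} {f : Fin n → α}

@[simp] theorem padZero_coe (f : Fin n → α) (i : Fin n) : padZero f i = f i := by
  simp [padZero]

variable [Preorder α]

theorem padZero_nonneg (hf : 0 ≤ f) : 0 ≤ padZero f := fun i => by
  unfold padZero
  split_ifs
  exacts [hf _, le_rfl]

theorem antitone_padZero (hf : Antitone f) (hf0 : 0 ≤ f) : Antitone (padZero f) :=
  fun i j hij => by
    by_cases hj : j < n
    · simp only [padZero, dif_pos hj, dif_pos (hij.trans_lt hj)]
      exact hf (Fin.mk_le_mk.mpr hij)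
    · simp only [padZero, dif_neg hj]
      exact padZero_nonneg hf0 i

end padZero

theorem sum_sum_mul_le_of_substochastic {n r : ℕ} (hr : r ≤ n) {s : Fin n → ℝ}
    {w : Fin r → ℝ} (hs : Antitone s) (hs0 : 0 ≤ s) (hw : Antitone w) (hw0 : 0 ≤ w)
    {C : Matrix (Fin n) (Fin r) ℝ} (hC0 : ∀ i k, 0 ≤ C i k) (hrow : ∀ i, ∑ k, C i k ≤ 1)
    (hcol : ∀ k, ∑ i, C i k ≤ 1) :
    ∑ i, ∑ k, C i k * s i * w k ≤ ∑ k, w k * s (Fin.castLE hr k) := by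
  have key := sum_range_sum_range_mul_le_of_substochastic (C := padZero fun i => padZero (C i)) hr
    (antitone_padZero hs hs0) (padZero_nonneg hs0) (antitone_padZero hw hw0)
    (padZero_nonneg hw0) ?_ ?_ ?_
  · have hcast (k : Fin r) : s (Fin.castLE hr k) = padZero s k := by
      rw [← padZero_coe s, Fin.val_castLE]
    simpa [sum_range, hcast] using key
  · intro i hi k hk
    rw [mem_range] at hi hk
    simpa [padZero, hi, hk] using hC0 ⟨i, hi⟩ ⟨k, hk⟩
  · intro i hi
    rw [mem_range] at hi
    simpa [sum_range, padZero, hi] using hrow ⟨i, hi⟩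
  · intro k hk
    rw [mem_range] at hk
    simpa [sum_range, padZero, hk] using hcol ⟨k, hk⟩

theorem sum_mul_le_sum_sum_of_stochastic {r : ℕ} {d w : Fin r → ℝ} (hd : Monotone d)
    (hw : Antitone w) (hw0 : 0 ≤ w) {C : Matrix (Fin r) (Fin r) ℝ} (hC0 : ∀ j k, 0 ≤ C j k)
    (hrow : ∀ j, ∑ k, C j k ≤ 1) (hcol : ∀ k, ∑ j, C j k = 1) :
    ∑ k, w k * d k ≤ ∑ j, ∑ k, C j k * d j * w k := by
  -- Apply the substochastic bound to the antitone, nonnegative sequence `M - d`.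
  set M := ∑ j, |d j|
  have hdM (j : Fin r) : d j ≤ M :=
    (le_abs_self _).trans (single_le_sum (fun j _ => abs_nonneg (d j)) (mem_univ j))
  have key := sum_sum_mul_le_of_substochastic le_rfl (s := fun j => M - d j)
    (fun i j hij => sub_le_sub_left (hd hij) M) (fun j => sub_nonneg.mpr (hdM j)) hw hw0 hC0
    hrow (fun k => (hcol k).le)
  have hcolw : ∑ j, ∑ k, C j k * w k = ∑ k, w k := by
    rw [sum_comm]
    exact sum_congr rfl fun k _ => by rw [← sum_mul, hcol, one_mul]
  simp only [Fin.castLE_refl, mul_sub, sub_mul, sum_sub_distrib, mul_comm _ M, mul_assoc,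
    ← mul_sum, hcolw] at key
  simp only [mul_assoc]
  linarith

theorem exists_perm_antitone_comp {n : ℕ} (f : Fin n → ℝ) :
    ∃ σ : Equiv.Perm (Fin n), Antitone (f ∘ σ) :=
  ⟨Tuple.sort (OrderDual.toDual ∘ f), monotone_toDual_comp_iff.mp (Tuple.monotone_sort _)⟩

theorem Matrix.PosSemidef.exists_orthogonal_antitone_diagonalization {r : ℕ}
    {A : Matrix (Fin r) (Fin r) ℝ} (hA : A.PosSemidef) :
    ∃ (U : Matrix (Fin r) (Fin r) ℝ) (μ : Fin r → ℝ),
      Uᵀ * U = 1 ∧ Antitone μ ∧ 0 ≤ μ ∧ A = U * diagonal μ * Uᵀ := by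
  set U₀ : Matrix (Fin r) (Fin r) ℝ :=
    (hA.isHermitian.eigenvectorUnitary : Matrix (Fin r) (Fin r) ℝ)
  have hU₀ : U₀ᵀ * U₀ = 1 := by
    simpa [U₀, star_eq_conjTranspose, conjTranspose_eq_transpose_of_trivial] using
      Unitary.coe_star_mul_self hA.isHermitian.eigenvectorUnitary
  have hA₀ : A = U₀ * diagonal hA.isHermitian.eigenvalues * U₀ᵀ := by
    simpa [U₀, star_eq_conjTranspose, conjTranspose_eq_transpose_of_trivial] using
      hA.isHermitian.spectral_theorem
  obtain ⟨τ, hτ⟩ := exists_perm_antitone_comp hA.isHermitian.eigenvalues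
  refine ⟨U₀.submatrix id τ, _ ∘ τ, ?_, hτ, fun k => hA.eigenvalues_nonneg _, ?_⟩
  · rw [transpose_submatrix, ← submatrix_mul _ _ _ _ _ Function.bijective_id, hU₀,
      submatrix_one_equiv]
  · rw [← submatrix_diagonal_equiv, transpose_submatrix, ← submatrix_mul _ _ _ _ _ τ.bijective,
      ← submatrix_mul _ _ _ _ _ τ.bijective, submatrix_id_id]
    exact hA₀

theorem mul_transpose_self_apply_self {m k : ℕ} (M : Matrix (Fin m) (Fin k) ℝ) (i : Fin m) :
    (M * Mᵀ) i i = ∑ j, M i j ^ 2 := by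
  simp [mul_apply, sq]

theorem transpose_mul_self_apply_self {m k : ℕ} (M : Matrix (Fin m) (Fin k) ℝ) (j : Fin k) :
    (Mᵀ * M) j j = ∑ i, M i j ^ 2 := by
  simp [mul_apply, sq]

theorem frob2_eq_trace {m k : ℕ} (M : Matrix (Fin m) (Fin k) ℝ) : frob2 M = trace (M * Mᵀ) := by
  simp [frob2, trace, mul_apply, sq]

theorem frob2_mul_transpose_comm {m k : ℕ} (Y : Matrix (Fin m) (Fin k) ℝ) :
    frob2 (Y * Yᵀ) = frob2 (Yᵀ * Y) := by
  simp only [frob2_eq_trace, transpose_mul, transpose_transpose, Matrix.mul_assoc]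
  rw [trace_mul_comm, Matrix.mul_assoc, Matrix.mul_assoc]

theorem frob2_diagonal_sub {m : ℕ} (s : Fin m → ℝ) (P : Matrix (Fin m) (Fin m) ℝ) :
    frob2 (diagonal s - P) = ∑ i, s i ^ 2 - 2 * ∑ i, s i * P i i + frob2 P := by
  simp [frob2, Matrix.sub_apply, sub_sq, sum_add_distrib, sum_sub_distrib, diagonal_apply,
    ite_pow, ite_mul, mul_sum, mul_assoc]

theorem frob2_diagonal {m : ℕ} (w : Fin m → ℝ) : frob2 (diagonal w) = ∑ k, w k ^ 2 := by
  simp [frob2, diagonal_apply, ite_pow]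

theorem fip_diagonal {m : ℕ} (d : Fin m → ℝ) (M : Matrix (Fin m) (Fin m) ℝ) :
    fip (diagonal d) M = ∑ j, d j * M j j := by
  simp [fip, diagonal_apply, ite_mul]

theorem diag_le_one_of_symm_of_idempotent {m : ℕ} {P : Matrix (Fin m) (Fin m) ℝ} (hP : Pᵀ = P)
    (hPP : P * P = P) (i : Fin m) : P i i ≤ 1 := by
  have h : P i i = ∑ j, P i j ^ 2 := by
    conv_lhs => rw [← hPP]
    rw [mul_apply]
    exact sum_congr rfl fun j _ => by rw [sq, ← transpose_apply P j i, hP]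
  have : P i i ^ 2 ≤ P i i :=
    h ▸ single_le_sum (f := fun j => P i j ^ 2) (fun j _ => sq_nonneg _) (mem_univ i)
  nlinarith

theorem sum_sq_div_le_one_of_transpose_mul_self_eq_diagonal {n r : ℕ}
    {Z : Matrix (Fin n) (Fin r) ℝ} {μ : Fin r → ℝ} (hZ : Zᵀ * Z = diagonal μ) (i : Fin n) :
    ∑ k, Z i k ^ 2 / μ k ≤ 1 := by
  -- `P` is an orthogonal projection; `0⁻¹ = 0` takes care of the zero columns of `Z`.
  set P := Z * diagonal μ⁻¹ * Zᵀ
  have hPt : Pᵀ = P := by simp [P, transpose_mul, Matrix.mul_assoc]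
  have hPP : P * P = P := by
    have : diagonal μ⁻¹ * diagonal μ * diagonal μ⁻¹ = diagonal μ⁻¹ := by
      rw [diagonal_mul_diagonal, diagonal_mul_diagonal]
      congr 1
      ext j
      by_cases h : μ j = 0 <;> simp [h]
    calc P * P = Z * (diagonal μ⁻¹ * (Zᵀ * Z) * diagonal μ⁻¹) * Zᵀ := by
          simp only [P, Matrix.mul_assoc]
      _ = P := by rw [hZ, this]
  have hPii : P i i = ∑ k, Z i k ^ 2 / μ k := by
    simp only [P]
    rw [mul_apply]
    simp [mul_diagonal, div_eq_mul_inv, sq, mul_right_comm]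
  exact hPii ▸ diag_le_one_of_symm_of_idempotent hPt hPP i

noncomputable def psi {n r : ℕ} (s : Fin n → ℝ) (d : Fin r → ℝ)
    (Y : Matrix (Fin n) (Fin r) ℝ) : ℝ :=
  frob2 (diagonal s - Y * Yᵀ) + 2 * fip (diagonal d) (Yᵀ * Y)

theorem psi_eq {n r : ℕ} (s : Fin n → ℝ) (d : Fin r → ℝ) (Y : Matrix (Fin n) (Fin r) ℝ) :
    psi s d Y = ∑ i, s i ^ 2 - 2 * ∑ i, s i * (Y * Yᵀ) i i + frob2 (Yᵀ * Y)
      + 2 * ∑ j, d j * (Yᵀ * Y) j j := by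
  rw [psi, frob2_diagonal_sub, frob2_mul_transpose_comm, fip_diagonal]

theorem frob2_submatrix {m k : ℕ} (M : Matrix (Fin m) (Fin k) ℝ) (σ : Equiv.Perm (Fin m))
    (τ : Equiv.Perm (Fin k)) : frob2 (M.submatrix σ τ) = frob2 M := by
  simp only [frob2, submatrix_apply]
  rw [Equiv.sum_comp σ fun i => ∑ j, M i (τ j) ^ 2]
  exact sum_congr rfl fun i _ => Equiv.sum_comp τ fun j => M i j ^ 2

theorem fip_submatrix {m k : ℕ} (A B : Matrix (Fin m) (Fin k) ℝ) (σ : Equiv.Perm (Fin m))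
    (τ : Equiv.Perm (Fin k)) : fip (A.submatrix σ τ) (B.submatrix σ τ) = fip A B := by
  simp only [fip, submatrix_apply]
  rw [Equiv.sum_comp σ fun i => ∑ j, A i (τ j) * B i (τ j)]
  exact sum_congr rfl fun i _ => Equiv.sum_comp τ fun j => A i j * B i j

theorem psi_submatrix {n r : ℕ} (s : Fin n → ℝ) (d : Fin r → ℝ) (Y : Matrix (Fin n) (Fin r) ℝ)
    (σ : Equiv.Perm (Fin n)) (δ : Equiv.Perm (Fin r)) :
    psi (s ∘ σ) (d ∘ δ) (Y.submatrix σ δ) = psi s d Y := by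
  have hσ : diagonal (s ∘ σ) - Y.submatrix σ δ * (Y.submatrix σ δ)ᵀ =
      (diagonal s - Y * Yᵀ).submatrix σ σ := by
    rw [← submatrix_diagonal_equiv, transpose_submatrix, submatrix_mul_equiv]
    rfl
  have hδ : (Y.submatrix σ δ)ᵀ * Y.submatrix σ δ = (Yᵀ * Y).submatrix δ δ := by
    rw [transpose_submatrix, submatrix_mul_equiv]
  rw [psi, psi, hσ, hδ, ← submatrix_diagonal_equiv, frob2_submatrix, fip_submatrix]

theorem IsGenPerm.submatrix {n r : ℕ} {Y : Matrix (Fin n) (Fin r) ℝ} (hY : IsGenPerm Y)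
    {f : Fin n → Fin n} {g : Fin r → Fin r} (hf : Function.Injective f)
    (hg : Function.Injective g) : IsGenPerm (Y.submatrix f g) :=
  ⟨fun _ _ _ hj hj' => hg (hY.1 _ _ _ hj hj'), fun _ _ _ hi hi' => hf (hY.2 _ _ _ hi hi')⟩

theorem neg_max_sq_le (c μ : ℝ) (hμ : 0 ≤ μ) : -max c 0 ^ 2 ≤ μ ^ 2 - 2 * (μ * c) := by
  rcases le_total c 0 with hc | hc
  · rw [max_eq_right hc]; nlinarith
  · rw [max_eq_left hc]; nlinarith [sq_nonneg (μ - c)]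

theorem le_psi_of_antitone_of_monotone {n r : ℕ} (hr : r ≤ n) {s : Fin n → ℝ} {d : Fin r → ℝ}
    (hs : Antitone s) (hs0 : 0 ≤ s) (hd : Monotone d) (Y : Matrix (Fin n) (Fin r) ℝ) :
    ∑ i, s i ^ 2 - ∑ k, max (s (Fin.castLE hr k) - d k) 0 ^ 2 ≤ psi s d Y := by
  obtain ⟨U, μ, hU, hμ, hμ0, hG⟩ :=
    (posSemidef_conjTranspose_mul_self Y).exists_orthogonal_antitone_diagonalization
  rw [conjTranspose_eq_transpose_of_trivial] at hG
  have hUU : U * Uᵀ = 1 := mul_eq_one_comm.mp hU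
  set Z := Y * U
  have hZtZ : Zᵀ * Z = diagonal μ := by
    simp only [Z, transpose_mul, Matrix.mul_assoc]
    rw [← Matrix.mul_assoc Yᵀ, hG]
    simp only [Matrix.mul_assoc, hU, Matrix.mul_one]
    rw [← Matrix.mul_assoc, hU, Matrix.one_mul]
  have hZZt : Z * Zᵀ = Y * Yᵀ := by
    simp only [Z, transpose_mul, Matrix.mul_assoc]
    rw [← Matrix.mul_assoc U, hUU, Matrix.one_mul]
  have hμZ (k : Fin r) : ∑ i, Z i k ^ 2 = μ k := by
    rw [← transpose_mul_self_apply_self, hZtZ, diagonal_apply_eq]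
  have hA : ∑ i, s i * (Y * Yᵀ) i i ≤ ∑ k, μ k * s (Fin.castLE hr k) := by
    have key := sum_sum_mul_le_of_substochastic hr hs hs0 hμ hμ0
      (C := fun i k => Z i k ^ 2 / μ k) (fun i k => div_nonneg (sq_nonneg _) (hμ0 k))
      (sum_sq_div_le_one_of_transpose_mul_self_eq_diagonal hZtZ) (fun k => by
        simpa [← sum_div, hμZ] using div_self_le_one (μ k))
    have hcancel (i : Fin n) (k : Fin r) : Z i k ^ 2 / μ k * s i * μ k = s i * Z i k ^ 2 := by
      rw [mul_right_comm, div_mul_cancel_of_imp, mul_comm]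
      intro hk
      rw [← hμZ] at hk
      exact (sum_eq_zero_iff_of_nonneg fun i _ => sq_nonneg (Z i k)).mp hk i (mem_univ i)
    simpa only [hcancel, ← mul_sum, ← mul_transpose_self_apply_self, hZZt] using key
  have hB : frob2 (Yᵀ * Y) = ∑ k, μ k ^ 2 := by
    rw [← frob2_mul_transpose_comm, ← hZZt, frob2_mul_transpose_comm, hZtZ, frob2_diagonal]
  have hC : ∑ k, μ k * d k ≤ ∑ j, d j * (Yᵀ * Y) j j := by
    have key := sum_mul_le_sum_sum_of_stochastic hd hμ hμ0 (C := fun j k => U j k ^ 2)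
      (fun j k => sq_nonneg _)
      (fun j => by rw [← mul_transpose_self_apply_self, hUU, one_apply_eq])
      (fun k => by rw [← transpose_mul_self_apply_self, hU, one_apply_eq])
    convert key using 2 with j
    rw [hG, mul_apply, mul_sum]
    simp only [mul_diagonal, transpose_apply]
    exact sum_congr rfl fun k _ => by ring
  have hD := sum_le_sum fun k (_ : k ∈ univ) =>
    neg_max_sq_le (s (Fin.castLE hr k) - d k) (μ k) (hμ0 k)
  rw [psi_eq, hB]
  simp only [sum_neg_distrib, sum_sub_distrib, mul_sub, ← mul_sum] at hD
  linarith

theorem sq_max_sub_two_mul_max (c : ℝ) : max c 0 ^ 2 - 2 * (max c 0 * c) = -max c 0 ^ 2 := by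
  rcases le_total c 0 with hc | hc
  · simp [max_eq_right hc]
  · rw [max_eq_left hc]; ring

def scaledEmbedding {n r : ℕ} (φ : Fin r → Fin n) (v : Fin r → ℝ) : Matrix (Fin n) (Fin r) ℝ :=
  of fun i k => if i = φ k then v k else 0

section scaledEmbedding
variable {n r : ℕ} {φ : Fin r → Fin n} (v : Fin r → ℝ)

theorem isGenPerm_scaledEmbedding (hφ : Function.Injective φ) :
    IsGenPerm (scaledEmbedding φ v) := by
  constructor
  · intro i j j' hj hj'
    simp only [scaledEmbedding, of_apply, ne_eq, ite_eq_right_iff, not_forall] at hj hj'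
    exact hφ (hj.1.symm.trans hj'.1)
  · intro i i' j hi hi'
    simp only [scaledEmbedding, of_apply, ne_eq, ite_eq_right_iff, not_forall] at hi hi'
    exact hi.1.trans hi'.1.symm

theorem transpose_mul_self_scaledEmbedding (hφ : Function.Injective φ) :
    (scaledEmbedding φ v)ᵀ * scaledEmbedding φ v = diagonal (v ^ 2) := by
  ext j k
  by_cases hjk : j = k
  · subst hjk; simp [scaledEmbedding, mul_apply, sq]
  · simp [scaledEmbedding, mul_apply, hjk, Ne.symm hjk, hφ.eq_iff]

theorem psi_scaledEmbedding (hφ : Function.Injective φ) (s : Fin n → ℝ) (d : Fin r → ℝ) :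
    psi s d (scaledEmbedding φ v) =
      ∑ i, s i ^ 2 + ∑ k, ((v k ^ 2) ^ 2 - 2 * (v k ^ 2 * (s (φ k) - d k))) := by
  have hdiag : ∑ i, s i * (scaledEmbedding φ v * (scaledEmbedding φ v)ᵀ) i i =
      ∑ k, v k ^ 2 * s (φ k) := by
    simp only [mul_transpose_self_apply_self, scaledEmbedding, of_apply, ite_pow, mul_sum]
    rw [sum_comm]
    simp [mul_comm]
  rw [psi_eq, transpose_mul_self_scaledEmbedding v hφ, hdiag, frob2_diagonal]
  simp only [diagonal_apply_eq, Pi.pow_apply, mul_sub, sum_sub_distrib, ← mul_sum,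
    mul_comm (d _)]
  ring

end scaledEmbedding

theorem exists_isGenPerm_minimizer_of_antitone_of_monotone {n r : ℕ} (hr : r ≤ n)
    {s : Fin n → ℝ} {d : Fin r → ℝ} (hs : Antitone s) (hs0 : 0 ≤ s) (hd : Monotone d) :
    ∃ Y, IsGenPerm Y ∧ ∀ Y', psi s d Y ≤ psi s d Y' := by
  set v : Fin r → ℝ := fun k => √(max (s (Fin.castLE hr k) - d k) 0)
  have hv (k : Fin r) : v k ^ 2 = max (s (Fin.castLE hr k) - d k) 0 :=
    Real.sq_sqrt (le_max_right _ _)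
  refine ⟨scaledEmbedding (Fin.castLE hr) v,
    isGenPerm_scaledEmbedding v (Fin.castLE_injective hr),
    fun Y' => le_of_eq_of_le ?_ (le_psi_of_antitone_of_monotone hr hs hs0 hd Y')⟩
  rw [psi_scaledEmbedding v (Fin.castLE_injective hr)]
  simp only [hv, sq_max_sub_two_mul_max, sum_neg_distrib]
  ring

theorem exists_gen_perm_minimizer_general (n r : ℕ) (hr : r ≤ n)
    (s : Fin n → ℝ) (d : Fin r → ℝ)
    (hs : ∀ i, 0 ≤ s i) :
    ∃ Y : Matrix (Fin n) (Fin r) ℝ, IsGenPerm Y ∧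
      ∀ Y' : Matrix (Fin n) (Fin r) ℝ,
        frob2 (Matrix.diagonal s - Y * Yᵀ) + 2 * fip (Matrix.diagonal d) (Yᵀ * Y) ≤
        frob2 (Matrix.diagonal s - Y' * Y'ᵀ) + 2 * fip (Matrix.diagonal d) (Y'ᵀ * Y') := by
  obtain ⟨σ, hσ⟩ := exists_perm_antitone_comp s
  obtain ⟨δ, hδ⟩ : ∃ δ : Equiv.Perm (Fin r), Monotone (d ∘ δ) := ⟨_, Tuple.monotone_sort d⟩
  obtain ⟨Y, hY, hmin⟩ :=
    exists_isGenPerm_minimizer_of_antitone_of_monotone hr hσ (fun i => hs _) hδ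
  refine ⟨Y.submatrix σ.symm δ.symm, hY.submatrix σ.symm.injective δ.symm.injective, fun Y' => ?_⟩
  have hY' := hmin (Y'.submatrix σ δ)
  have hYσδ : (Y.submatrix σ.symm δ.symm).submatrix σ δ = Y := by simp [submatrix_submatrix]
  rw [psi_submatrix, ← hYσδ, psi_submatrix] at hY'
  exact hY'

/-- for nonnegative diagonal `A = diag(s)`, `B = diag(d)` with
`r ≤ n`, the function `ψ(Y) = ‖A − YYᵀ‖_F² + 2⟨B, YᵀY⟩` admits a global
minimizer `Y*` that is a generalized permutation. -/
theorem exists_gen_perm_minimizer (n r : ℕ) (hr : r ≤ n)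
    (s : Fin n → ℝ) (d : Fin r → ℝ)
    (hs : ∀ i, 0 ≤ s i) (hd : ∀ i, 0 ≤ d i) :
    ∃ Y : Matrix (Fin n) (Fin r) ℝ, IsGenPerm Y ∧
      ∀ Y' : Matrix (Fin n) (Fin r) ℝ,
        frob2 (Matrix.diagonal s - Y * Yᵀ) + 2 * fip (Matrix.diagonal d) (Yᵀ * Y) ≤
        frob2 (Matrix.diagonal s - Y' * Y'ᵀ) + 2 * fip (Matrix.diagonal d) (Y'ᵀ * Y') :=
  exists_gen_perm_minimizer_general n r hr s d hs
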